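/- In the commutative shuffle algebra \bar{T}^*(J) of linear forms on the tensor Hopf algebra \bar{T}(J) (with the cocommutative unshuffle coproduct), let \tau be a linear form vanishing on the degree-zero component, and let \phi be the unique solution of the linear fixed point equation \phi = \iota + \tau \prec \phi, where \iota is the counit. Then \phi = \exp^{\prec}(\tau) = \exp^{\shuffle}(\tau), i.e. the ordered exponential equals the proper exponential \exp^{\shuffle}(\tau) = \iota + \sum_{n>0} \tau^{\shuffle n}/n! defined with respect to the (commutative) convolution product \shuffle = \prec + \succ. -/

import Mathlib

open scoped TensorProduct

noncomputable section
attribute [local instance] Classical.propDecidable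

/-- The tensor algebra `T̄(J)`: basis all words over `J`, concatenation product. -/
abbrev TA (K : Type) [Field K] (J : Type) := MonoidAlgebra K (FreeMonoid J)

variable (K : Type) [Field K] (J : Type)

def wordElemT (l : List J) : TA K J := MonoidAlgebra.single (FreeMonoid.ofList l) 1

def subwordT (w : List J) (S : Finset ℕ) : List J :=
  (S.sort (· ≤ ·)).filterMap (fun i => w[i]?)

/-- Basis-linear extension of a function on words. -/
def extendT {M : Type} [AddCommMonoid M] [Module K M] (f : FreeMonoid J → M) :
    TA K J →ₗ[K] M :=
  (Finsupp.lift M K (FreeMonoid J) f).comp (MonoidAlgebra.coeffLinearEquiv K).toLinearMap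

/-- The unshuffle coproduct on a word: `Δ(w) = ∑_{I ⊆ [n]} j_I ⊗ j_{[n]∖I}`. -/
def deltaShWord (w : List J) : TA K J ⊗[K] TA K J :=
  ∑ I ∈ (Finset.range w.length).powerset,
    wordElemT K J (subwordT J w I) ⊗ₜ[K] wordElemT K J (subwordT J w (Finset.range w.length \ I))

/-- The unshuffle coproduct `Δ^⧢` on `T̄(J)`. -/
def deltaSh : TA K J →ₗ[K] TA K J ⊗[K] TA K J :=
  extendT K J (fun g => deltaShWord K J (FreeMonoid.toList g))

/-- The left half-unshuffle `Δ^⧢_≺`: the partial sum over subsets containing the first letter. -/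
def deltaShPrec : TA K J →ₗ[K] TA K J ⊗[K] TA K J :=
  extendT K J (fun g =>
    ∑ I ∈ ((Finset.range (FreeMonoid.toList g).length).powerset.filter (fun I => 0 ∈ I)),
      wordElemT K J (subwordT J (FreeMonoid.toList g) I) ⊗ₜ[K]
        wordElemT K J (subwordT J (FreeMonoid.toList g) (Finset.range (FreeMonoid.toList g).length \ I)))

/-- The right half-unshuffle `Δ^⧢_≻`: the partial sum over subsets not containing the first letter. -/
def deltaShSucc : TA K J →ₗ[K] TA K J ⊗[K] TA K J :=
  extendT K J (fun g =>
    ∑ I ∈ ((Finset.range (FreeMonoid.toList g).length).powerset.filter (fun I => 0 ∉ I)),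
      wordElemT K J (subwordT J (FreeMonoid.toList g) I) ⊗ₜ[K]
        wordElemT K J (subwordT J (FreeMonoid.toList g) (Finset.range (FreeMonoid.toList g).length \ I)))

/-- The counit `ι`: `1` on the empty word and `0` in positive degree. -/
def iotaT : TA K J →ₗ[K] K :=
  (MonoidAlgebra.lift K K (FreeMonoid J) (FreeMonoid.lift (fun _ => (0 : K)))).toLinearMap

/-- Convolution: `α ⧢ β := m_K ∘ (α ⊗ β) ∘ Δ^⧢`. -/
def convT (α β : TA K J →ₗ[K] K) : TA K J →ₗ[K] K :=
  (LinearMap.mul' K K).comp ((TensorProduct.map α β).comp (deltaSh K J))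

/-- Left half-convolution: `α ≺ β := m_K ∘ (α ⊗ β) ∘ Δ^⧢_≺`. -/
def cprecT (α β : TA K J →ₗ[K] K) : TA K J →ₗ[K] K :=
  (LinearMap.mul' K K).comp ((TensorProduct.map α β).comp (deltaShPrec K J))

/-- Right half-convolution: `α ≻ β := m_K ∘ (α ⊗ β) ∘ Δ^⧢_≻`. -/
def csuccT (α β : TA K J →ₗ[K] K) : TA K J →ₗ[K] K :=
  (LinearMap.mul' K K).comp ((TensorProduct.map α β).comp (deltaShSucc K J))

def degT (g : FreeMonoid J) : ℕ := (FreeMonoid.toList g).length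

def precPowT (x : TA K J →ₗ[K] K) : ℕ → (TA K J →ₗ[K] K)
  | 0 => iotaT K J
  | n + 1 => cprecT K J x (precPowT x n)

def shPowT (x : TA K J →ₗ[K] K) : ℕ → (TA K J →ₗ[K] K)
  | 0 => iotaT K J
  | n + 1 => convT K J x (shPowT x n)

/-- The ordered exponential `exp^≺(τ) = ι + ∑_{n>0} τ^{≺n}`, defined degreewise. -/
def expPrecT (x : TA K J →ₗ[K] K) : TA K J →ₗ[K] K :=
  extendT K J (fun g =>
    ∑ n ∈ Finset.range (degT J g + 1), precPowT K J x n (MonoidAlgebra.single g 1))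

/-- The exponential `exp^⧢(τ) = ι + ∑_{n>0} τ^{⧢n}/n!` for the commutative convolution
product `⧢ = ≺ + ≻`, defined degreewise. -/
def expShT (x : TA K J →ₗ[K] K) : TA K J →ₗ[K] K :=
  extendT K J (fun g =>
    ∑ n ∈ Finset.range (degT J g + 1),
      (1 / ((Nat.factorial n : ℕ) : K)) * shPowT K J x n (MonoidAlgebra.single g 1))

lemma sort_eq_filter (n : ℕ) (S : Finset ℕ) (hS : S ⊆ Finset.range n) :
    S.sort (· ≤ ·) = (List.range n).filter (· ∈ S) := by
  refine (fun hp h1 h2 => List.Perm.eq_of_pairwise' (r := (· ≤ ·)) h1 h2 hp) ?_ ?_ ?_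
  · apply List.perm_of_nodup_nodup_toFinset_eq (Finset.sort_nodup _ _)
      ((List.nodup_range).filter _)
    ext x
    simp only [List.mem_toFinset, Finset.mem_sort, List.mem_filter, List.mem_range,
      decide_eq_true_eq]
    exact ⟨fun h => ⟨Finset.mem_range.mp (hS h), h⟩, fun h => h.2⟩
  · exact Finset.pairwise_sort _ _
  · exact List.Pairwise.filter _ List.pairwise_le_range

lemma image_succ_pred (A : Finset ℕ) : (A.image (· + 1)).image (· - 1) = A := by
  rw [Finset.image_image]
  calc A.image ((· - 1) ∘ (· + 1)) = A.image id := Finset.image_congr (fun x _ => by simp)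
  _ = A := Finset.image_id

lemma mem_image_succ (A : Finset ℕ) (x : ℕ) : x + 1 ∈ A.image (· + 1) ↔ x ∈ A := by
  simp only [Finset.mem_image]
  exact ⟨fun ⟨a, ha, h⟩ => by simpa [show a = x by omega] using ha, fun h => ⟨x, h, rfl⟩⟩

lemma zero_not_mem_image_succ (A : Finset ℕ) : 0 ∉ A.image (· + 1) := by
  simp only [Finset.mem_image]; rintro ⟨a, _, h⟩; omega

lemma subword_insert (j : J) (u : List J) (I : Finset ℕ) (hI : I ⊆ Finset.range u.length) :
    subwordT J (j :: u) (insert 0 (I.image (· + 1))) = j :: subwordT J u I := by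
  have hS : insert 0 (I.image (· + 1)) ⊆ Finset.range (u.length + 1) := by
    intro x hx
    simp only [Finset.mem_insert, Finset.mem_image] at hx
    rcases hx with h | ⟨a, ha, rfl⟩
    · simp [h]
    · have := Finset.mem_range.mp (hI ha); simp; omega
  unfold subwordT
  rw [sort_eq_filter (u.length + 1) _ hS, sort_eq_filter u.length _ hI,
    List.range_succ_eq_map, List.filter_cons]
  rw [if_pos (by simp), List.filter_map]
  have hpred : List.filter ((fun x => decide (x ∈ insert 0 (I.image (· + 1)))) ∘ Nat.succ)
      (List.range u.length) = List.filter (fun x => decide (x ∈ I)) (List.range u.length) := by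
    apply List.filter_congr
    intro x _
    simp [Function.comp, Finset.mem_insert, mem_image_succ]
  rw [hpred, List.filterMap_cons]
  simp only [List.getElem?_cons_zero, List.filterMap_map]
  rw [show ((fun i => (j :: u)[i]?) ∘ Nat.succ) = (fun i => u[i]?) from
    funext (fun i => List.getElem?_cons_succ)]

lemma subword_shift (j : J) (u : List J) (I : Finset ℕ) (hI : I ⊆ Finset.range u.length) :
    subwordT J (j :: u) (I.image (· + 1)) = subwordT J u I := by
  have hS : I.image (· + 1) ⊆ Finset.range (u.length + 1) := by
    intro x hx
    simp only [Finset.mem_image] at hx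
    rcases hx with ⟨a, ha, rfl⟩
    have := Finset.mem_range.mp (hI ha); simp; omega
  unfold subwordT
  rw [sort_eq_filter (u.length + 1) _ hS, sort_eq_filter u.length _ hI,
    List.range_succ_eq_map, List.filter_cons]
  rw [if_neg (by simpa using zero_not_mem_image_succ J I), List.filter_map]
  have hpred : List.filter ((fun x => decide (x ∈ I.image (· + 1))) ∘ Nat.succ)
      (List.range u.length) = List.filter (fun x => decide (x ∈ I)) (List.range u.length) := by
    apply List.filter_congr
    intro x _
    simp [Function.comp, mem_image_succ]
  rw [hpred, List.filterMap_map]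
  rw [show ((fun i => (j :: u)[i]?) ∘ Nat.succ) = (fun i => u[i]?) from
    funext (fun i => List.getElem?_cons_succ)]

lemma compl_insert (n : ℕ) (I : Finset ℕ) :
    Finset.range (n+1) \ insert 0 (I.image (· + 1)) = (Finset.range n \ I).image (· + 1) := by
  ext x
  cases x with
  | zero => simp
  | succ x => simp [mem_image_succ, Nat.succ_lt_succ_iff]

lemma compl_shift (n : ℕ) (I : Finset ℕ) :
    Finset.range (n+1) \ I.image (· + 1) = insert 0 ((Finset.range n \ I).image (· + 1)) := by
  ext x
  cases x with
  | zero => simp [zero_not_mem_image_succ]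
  | succ x => simp [mem_image_succ, Nat.succ_lt_succ_iff]

lemma image_pred_succ (A : Finset ℕ) (h0 : 0 ∉ A) : (A.image (· - 1)).image (· + 1) = A := by
  rw [Finset.image_image]
  calc A.image ((· + 1) ∘ (· - 1)) = A.image id := Finset.image_congr (fun x hx => by
        have : x ≠ 0 := fun h => h0 (h ▸ hx)
        simp only [Function.comp, id]; omega)
    _ = A := Finset.image_id

lemma zero_notmem' (A : Finset ℕ) : (0 : ℕ) ∉ A.image (· + 1) := by
  simp only [Finset.mem_image]; rintro ⟨a, _, h⟩; omega

lemma sum_reindex_mem {M : Type} [AddCommMonoid M] (n : ℕ) (F : Finset ℕ → M) :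
    ∑ I ∈ (Finset.range (n+1)).powerset.filter (fun I => 0 ∈ I), F I
      = ∑ I ∈ (Finset.range n).powerset, F (insert 0 (I.image (· + 1))) := by
  refine Finset.sum_nbij' (i := fun I => (I.erase 0).image (· - 1))
    (j := fun I => insert 0 (I.image (· + 1))) ?_ ?_ ?_ ?_ ?_
  · intro I hI
    simp only [Finset.mem_filter, Finset.mem_powerset] at hI
    simp only [Finset.mem_powerset]
    intro x hx
    simp only [Finset.mem_image, Finset.mem_erase] at hx
    obtain ⟨a, ⟨ha0, ha⟩, rfl⟩ := hx
    have := Finset.mem_range.mp (hI.1 ha)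
    simp only [Finset.mem_range]; omega
  · intro I hI
    simp only [Finset.mem_powerset] at hI
    simp only [Finset.mem_filter, Finset.mem_powerset]
    constructor
    · intro x hx
      simp only [Finset.mem_insert, Finset.mem_image] at hx
      rcases hx with rfl | ⟨a, ha, rfl⟩
      · simp
      · have := Finset.mem_range.mp (hI ha); simp only [Finset.mem_range]; omega
    · exact Finset.mem_insert_self 0 _
  · intro I hI
    simp only [Finset.mem_filter, Finset.mem_powerset] at hI
    rw [image_pred_succ _ (by simp), Finset.insert_erase hI.2]
  · intro I _
    rw [Finset.erase_insert (zero_notmem' I), image_succ_pred]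
  · intro I hI
    simp only [Finset.mem_filter, Finset.mem_powerset] at hI
    rw [image_pred_succ _ (by simp), Finset.insert_erase hI.2]

lemma sum_reindex_notmem {M : Type} [AddCommMonoid M] (n : ℕ) (F : Finset ℕ → M) :
    ∑ I ∈ (Finset.range (n+1)).powerset.filter (fun I => 0 ∉ I), F I
      = ∑ I ∈ (Finset.range n).powerset, F (I.image (· + 1)) := by
  refine Finset.sum_nbij' (i := fun I => I.image (· - 1)) (j := fun I => I.image (· + 1))
    ?_ ?_ ?_ ?_ ?_
  · intro I hI
    simp only [Finset.mem_filter, Finset.mem_powerset] at hI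
    simp only [Finset.mem_powerset]
    intro x hx
    simp only [Finset.mem_image] at hx
    obtain ⟨a, ha, rfl⟩ := hx
    have h0 : a ≠ 0 := fun h => hI.2 (h ▸ ha)
    have := Finset.mem_range.mp (hI.1 ha)
    simp only [Finset.mem_range]; omega
  · intro I hI
    simp only [Finset.mem_powerset] at hI
    simp only [Finset.mem_filter, Finset.mem_powerset]
    refine ⟨?_, zero_notmem' I⟩
    intro x hx
    simp only [Finset.mem_image] at hx
    obtain ⟨a, ha, rfl⟩ := hx
    have := Finset.mem_range.mp (hI ha); simp only [Finset.mem_range]; omega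
  · intro I hI
    simp only [Finset.mem_filter, Finset.mem_powerset] at hI
    exact image_pred_succ I hI.2
  · intro I _
    exact image_succ_pred I
  · intro I hI
    simp only [Finset.mem_filter, Finset.mem_powerset] at hI
    rw [image_pred_succ I hI.2]

lemma extendT_single {M : Type} [AddCommMonoid M] [Module K M] (f : FreeMonoid J → M)
    (g : FreeMonoid J) : extendT K J f (MonoidAlgebra.single g 1) = f g := by
  show (Finsupp.lift M K (FreeMonoid J)) f (MonoidAlgebra.coeffLinearEquiv K (MonoidAlgebra.single g 1)) = f g
  rw [MonoidAlgebra.coeffLinearEquiv_apply, MonoidAlgebra.coeff_single, Finsupp.lift_apply, Finsupp.sum_single_index (by simp), one_smul]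

lemma wordElemT_nil : wordElemT K J [] = 1 := rfl

lemma single_eq_word (g : FreeMonoid J) :
    MonoidAlgebra.single g (1:K) = wordElemT K J (FreeMonoid.toList g) := by
  simp [wordElemT]

lemma TA_ext {M : Type} [AddCommMonoid M] [Module K M] (f g : TA K J →ₗ[K] M)
    (h : ∀ l : List J, f (wordElemT K J l) = g (wordElemT K J l)) : f = g := by
  apply MonoidAlgebra.lhom_ext'
  intro a
  apply LinearMap.ext
  intro b
  have h1 : MonoidAlgebra.single a b = b • MonoidAlgebra.single a (1:K) := by
    rw [MonoidAlgebra.smul_single', mul_one]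
  simp only [LinearMap.comp_apply, MonoidAlgebra.lsingle_apply, h1, map_smul]
  rw [single_eq_word]
  exact congrArg (fun x => b • x) (h _)

lemma mulLeft_word (j : J) (u : List J) :
    LinearMap.mulLeft K (wordElemT K J [j]) (wordElemT K J u) = wordElemT K J (j :: u) := by
  simp only [LinearMap.mulLeft_apply, wordElemT, MonoidAlgebra.single_mul_single, one_mul]
  rfl

lemma deltaSh_word (w : List J) :
    deltaSh K J (wordElemT K J w) = deltaShWord K J w := by
  unfold deltaSh wordElemT
  rw [extendT_single]
  simp

lemma deltaShPrec_word (w : List J) :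
    deltaShPrec K J (wordElemT K J w) =
      ∑ I ∈ (Finset.range w.length).powerset.filter (fun I => 0 ∈ I),
        wordElemT K J (subwordT J w I) ⊗ₜ[K]
          wordElemT K J (subwordT J w (Finset.range w.length \ I)) := by
  unfold deltaShPrec wordElemT
  rw [extendT_single]
  simp

lemma deltaShSucc_word (w : List J) :
    deltaShSucc K J (wordElemT K J w) =
      ∑ I ∈ (Finset.range w.length).powerset.filter (fun I => 0 ∉ I),
        wordElemT K J (subwordT J w I) ⊗ₜ[K]
          wordElemT K J (subwordT J w (Finset.range w.length \ I)) := by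
  unfold deltaShSucc wordElemT
  rw [extendT_single]
  simp

lemma subword_nil (S : Finset ℕ) : subwordT J ([] : List J) S = [] := by
  unfold subwordT
  apply List.eq_nil_of_length_eq_zero
  simp [List.length_filterMap_eq_countP]

lemma deltaShPrec_one : deltaShPrec K J 1 = 0 := by
  rw [← wordElemT_nil, deltaShPrec_word]
  rw [show ([]:List J).length = 0 from rfl, Finset.range_zero, Finset.powerset_empty,
    Finset.filter_singleton]
  simp

lemma deltaShSucc_one : deltaShSucc K J 1 = 1 ⊗ₜ[K] 1 := by
  rw [← wordElemT_nil, deltaShSucc_word]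
  rw [show ([]:List J).length = 0 from rfl, Finset.range_zero, Finset.powerset_empty,
    Finset.filter_singleton]
  simp [subword_nil, wordElemT_nil]

lemma deltaSh_one : deltaSh K J 1 = 1 ⊗ₜ[K] 1 := by
  rw [← wordElemT_nil, deltaSh_word]
  unfold deltaShWord
  rw [show ([]:List J).length = 0 from rfl, Finset.range_zero, Finset.powerset_empty]
  simp [subword_nil, wordElemT_nil]

lemma deltaShPrec_cons (j : J) (u : List J) :
    deltaShPrec K J (wordElemT K J (j :: u)) =
      (TensorProduct.map (LinearMap.mulLeft K (wordElemT K J [j])) LinearMap.id)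
        (deltaShWord K J u) := by
  rw [deltaShPrec_word]
  unfold deltaShWord
  rw [show (j :: u).length = u.length + 1 from rfl]
  rw [sum_reindex_mem u.length]
  rw [map_sum]
  apply Finset.sum_congr rfl
  intro I hI
  have hI' : I ⊆ Finset.range u.length := Finset.mem_powerset.mp hI
  rw [subword_insert J j u I hI', compl_insert, subword_shift J j u _ (Finset.sdiff_subset)]
  rw [TensorProduct.map_tmul, mulLeft_word, LinearMap.id_apply]

lemma deltaShSucc_cons (j : J) (u : List J) :
    deltaShSucc K J (wordElemT K J (j :: u)) =
      (TensorProduct.map LinearMap.id (LinearMap.mulLeft K (wordElemT K J [j])))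
        (deltaShWord K J u) := by
  rw [deltaShSucc_word]
  unfold deltaShWord
  rw [show (j :: u).length = u.length + 1 from rfl]
  rw [sum_reindex_notmem u.length]
  rw [map_sum]
  apply Finset.sum_congr rfl
  intro I hI
  have hI' : I ⊆ Finset.range u.length := Finset.mem_powerset.mp hI
  rw [subword_shift J j u I hI', compl_shift, subword_insert J j u _ (Finset.sdiff_subset)]
  rw [TensorProduct.map_tmul, mulLeft_word, LinearMap.id_apply]

lemma deltaSh_split : deltaSh K J = deltaShPrec K J + deltaShSucc K J := by
  apply TA_ext
  intro w
  rw [LinearMap.add_apply, deltaSh_word, deltaShPrec_word, deltaShSucc_word]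
  unfold deltaShWord
  exact (Finset.sum_filter_add_sum_filter_not _ _ _).symm

lemma cprecT_one (α β : TA K J →ₗ[K] K) : cprecT K J α β 1 = 0 := by
  unfold cprecT
  simp [deltaShPrec_one]

lemma csuccT_one (α β : TA K J →ₗ[K] K) : csuccT K J α β 1 = α 1 * β 1 := by
  unfold csuccT
  simp [deltaShSucc_one, LinearMap.mul'_apply]

lemma convT_one (α β : TA K J →ₗ[K] K) : convT K J α β 1 = α 1 * β 1 := by
  unfold convT
  simp [deltaSh_one, LinearMap.mul'_apply]

lemma cprecT_cons (α β : TA K J →ₗ[K] K) (j : J) (u : List J) :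
    cprecT K J α β (wordElemT K J (j :: u)) =
      convT K J (α ∘ₗ LinearMap.mulLeft K (wordElemT K J [j])) β (wordElemT K J u) := by
  unfold cprecT convT
  simp only [LinearMap.comp_apply, deltaShPrec_cons, deltaSh_word]
  congr 1
  rw [← LinearMap.comp_apply (TensorProduct.map α β), ← TensorProduct.map_comp,
    LinearMap.comp_id]

lemma csuccT_cons (α β : TA K J →ₗ[K] K) (j : J) (u : List J) :
    csuccT K J α β (wordElemT K J (j :: u)) =
      convT K J α (β ∘ₗ LinearMap.mulLeft K (wordElemT K J [j])) (wordElemT K J u) := by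
  unfold csuccT convT
  simp only [LinearMap.comp_apply, deltaShSucc_cons, deltaSh_word]
  congr 1
  rw [← LinearMap.comp_apply (TensorProduct.map α β), ← TensorProduct.map_comp,
    LinearMap.comp_id]

lemma splitT (α β : TA K J →ₗ[K] K) : convT K J α β = cprecT K J α β + csuccT K J α β := by
  unfold convT cprecT csuccT
  rw [deltaSh_split]
  ext x
  simp

lemma convT_cons (α β : TA K J →ₗ[K] K) (j : J) (u : List J) :
    convT K J α β (wordElemT K J (j :: u)) =
      convT K J (α ∘ₗ LinearMap.mulLeft K (wordElemT K J [j])) β (wordElemT K J u)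
      + convT K J α (β ∘ₗ LinearMap.mulLeft K (wordElemT K J [j])) (wordElemT K J u) := by
  rw [splitT, LinearMap.add_apply, cprecT_cons, csuccT_cons]

lemma cprecT_add_right (α β γ : TA K J →ₗ[K] K) :
    cprecT K J α (β + γ) = cprecT K J α β + cprecT K J α γ := by
  unfold cprecT; ext x; simp [TensorProduct.map_add_right]

lemma cprecT_smul_right (c : K) (α β : TA K J →ₗ[K] K) :
    cprecT K J α (c • β) = c • cprecT K J α β := by
  unfold cprecT; ext x; simp [TensorProduct.map_smul_right]

lemma convT_add_right (α β γ : TA K J →ₗ[K] K) :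
    convT K J α (β + γ) = convT K J α β + convT K J α γ := by
  unfold convT; ext x; simp [TensorProduct.map_add_right]

lemma convT_smul_right (c : K) (α β : TA K J →ₗ[K] K) :
    convT K J α (c • β) = c • convT K J α β := by
  unfold convT; ext x; simp [TensorProduct.map_smul_right]

lemma convT_add_left (α β γ : TA K J →ₗ[K] K) :
    convT K J (α + β) γ = convT K J α γ + convT K J β γ := by
  unfold convT; ext x; simp [TensorProduct.map_add_left]

lemma convT_smul_left (c : K) (α β : TA K J →ₗ[K] K) :
    convT K J (c • α) β = c • convT K J α β := by
  unfold convT; ext x; simp [TensorProduct.map_smul_left]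

lemma convT_zero_left (β : TA K J →ₗ[K] K) : convT K J 0 β = 0 := by
  unfold convT; ext x
  simp [TensorProduct.map_zero_left]

lemma convT_zero_right (α : TA K J →ₗ[K] K) : convT K J α 0 = 0 := by
  unfold convT; ext x; simp [TensorProduct.map_zero_right]

lemma iota_one : iotaT K J 1 = 1 := by
  unfold iotaT; simp

lemma iota_cons (j : J) (u : List J) : iotaT K J (wordElemT K J (j :: u)) = 0 := by
  unfold iotaT wordElemT
  rw [AlgHom.toLinearMap_apply, MonoidAlgebra.lift_single, one_smul]
  show FreeMonoid.lift (fun _ => (0:K)) (FreeMonoid.ofList (j :: u)) = 0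
  rw [FreeMonoid.lift_ofList]
  simp

lemma iota_comp_mulLeft (j : J) :
    iotaT K J ∘ₗ LinearMap.mulLeft K (wordElemT K J [j]) = 0 := by
  apply TA_ext
  intro v
  rw [LinearMap.comp_apply, mulLeft_word, iota_cons, LinearMap.zero_apply]

lemma conv_comp_mulLeft (α β : TA K J →ₗ[K] K) (j : J) :
    (convT K J α β) ∘ₗ LinearMap.mulLeft K (wordElemT K J [j])
      = convT K J (α ∘ₗ LinearMap.mulLeft K (wordElemT K J [j])) β
        + convT K J α (β ∘ₗ LinearMap.mulLeft K (wordElemT K J [j])) := by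
  apply TA_ext
  intro v
  simp only [LinearMap.comp_apply, LinearMap.add_apply, mulLeft_word, convT_cons]

lemma prec_comp_mulLeft (α β : TA K J →ₗ[K] K) (j : J) :
    (cprecT K J α β) ∘ₗ LinearMap.mulLeft K (wordElemT K J [j])
      = convT K J (α ∘ₗ LinearMap.mulLeft K (wordElemT K J [j])) β := by
  apply TA_ext
  intro v
  simp only [LinearMap.comp_apply, mulLeft_word, cprecT_cons]

lemma convT_comm (α β : TA K J →ₗ[K] K) : convT K J α β = convT K J β α := by
  apply TA_ext
  suffices h : ∀ (u : List J) (α β : TA K J →ₗ[K] K),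
      convT K J α β (wordElemT K J u) = convT K J β α (wordElemT K J u) from fun u => h u α β
  intro u
  induction u with
  | nil => intro α β; rw [wordElemT_nil, convT_one, convT_one, mul_comm]
  | cons j u ih =>
    intro α β
    rw [convT_cons, convT_cons,
      ih (α ∘ₗ LinearMap.mulLeft K (wordElemT K J [j])) β,
      ih α (β ∘ₗ LinearMap.mulLeft K (wordElemT K J [j])), add_comm]

lemma convT_assoc (α β γ : TA K J →ₗ[K] K) :
    convT K J (convT K J α β) γ = convT K J α (convT K J β γ) := by
  apply TA_ext
  suffices h : ∀ (u : List J) (α β γ : TA K J →ₗ[K] K),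
      convT K J (convT K J α β) γ (wordElemT K J u)
        = convT K J α (convT K J β γ) (wordElemT K J u) from fun u => h u α β γ
  intro u
  induction u with
  | nil =>
    intro α β γ
    rw [wordElemT_nil, convT_one, convT_one, convT_one, convT_one, mul_assoc]
  | cons j u ih =>
    intro α β γ
    rw [convT_cons, convT_cons, conv_comp_mulLeft, conv_comp_mulLeft, convT_add_left,
      convT_add_right, LinearMap.add_apply, LinearMap.add_apply, ih, ih, ih]
    ring

lemma succ_swap (α β : TA K J →ₗ[K] K) (h : α 1 * β 1 = 0) :
    csuccT K J α β = cprecT K J β α := by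
  apply TA_ext
  intro u
  cases u with
  | nil => rw [wordElemT_nil, csuccT_one, cprecT_one, h]
  | cons j u => rw [csuccT_cons, cprecT_cons, convT_comm]

lemma zinbielT (α β γ : TA K J →ₗ[K] K) :
    cprecT K J (cprecT K J α β) γ = cprecT K J α (convT K J β γ) := by
  apply TA_ext
  intro u
  cases u with
  | nil => rw [wordElemT_nil, cprecT_one, cprecT_one]
  | cons j u => rw [cprecT_cons, cprecT_cons, prec_comp_mulLeft, convT_assoc]

lemma conv_iota_right (α : TA K J →ₗ[K] K) : convT K J α (iotaT K J) = α := by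
  apply TA_ext
  suffices h : ∀ (u : List J) (α : TA K J →ₗ[K] K),
      convT K J α (iotaT K J) (wordElemT K J u) = α (wordElemT K J u) from fun u => h u α
  intro u
  induction u with
  | nil => intro α; rw [wordElemT_nil, convT_one, iota_one, mul_one]
  | cons j u ih =>
    intro α
    rw [convT_cons, iota_comp_mulLeft, convT_zero_right, ih, LinearMap.zero_apply, add_zero,
      LinearMap.comp_apply, mulLeft_word]

lemma cprec_iota_left (β : TA K J →ₗ[K] K) : cprecT K J (iotaT K J) β = 0 := by
  apply TA_ext
  intro u
  cases u with
  | nil => rw [wordElemT_nil, cprecT_one]; rfl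
  | cons j u =>
    rw [cprecT_cons, iota_comp_mulLeft, convT_zero_left]; rfl

lemma prec_pow_succ (τ : TA K J →ₗ[K] K) (hτ : τ 1 = 0) (n : ℕ) :
    cprecT K J (precPowT K J τ n) τ = (n : K) • precPowT K J τ (n + 1) := by
  induction n with
  | zero =>
    rw [Nat.cast_zero, zero_smul]
    exact cprec_iota_left K J τ
  | succ n ih =>
    show cprecT K J (cprecT K J τ (precPowT K J τ n)) τ = _
    rw [zinbielT, splitT K J (precPowT K J τ n) τ,
      succ_swap K J (precPowT K J τ n) τ (by rw [hτ, mul_zero]), ih,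
      cprecT_add_right, cprecT_smul_right]
    have h2 : cprecT K J τ (precPowT K J τ (n+1)) = precPowT K J τ (n+1+1) := rfl
    have h3 : cprecT K J τ (cprecT K J τ (precPowT K J τ n)) = precPowT K J τ (n+1+1) := rfl
    rw [h2, h3, Nat.cast_add, Nat.cast_one, add_smul, one_smul]

lemma shPow_eq_factorial_smul (τ : TA K J →ₗ[K] K) (hτ : τ 1 = 0) (n : ℕ) :
    shPowT K J τ n = ((Nat.factorial n : ℕ) : K) • precPowT K J τ n := by
  induction n with
  | zero => show iotaT K J = ((1:ℕ):K) • iotaT K J; rw [Nat.cast_one, one_smul]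
  | succ n ih =>
    show convT K J τ (shPowT K J τ n) = _
    rw [ih, convT_smul_right, splitT K J τ (precPowT K J τ n),
      succ_swap K J τ (precPowT K J τ n) (by rw [hτ, zero_mul]), prec_pow_succ K J τ hτ]
    have h2 : cprecT K J τ (precPowT K J τ n) = precPowT K J τ (n+1) := rfl
    rw [h2, smul_add, smul_smul, ← add_smul, Nat.factorial_succ, Nat.cast_mul,
      Nat.cast_add, Nat.cast_one]
    congr 1
    ring

lemma cprecT_word (α β : TA K J →ₗ[K] K) (w : List J) :
    cprecT K J α β (wordElemT K J w) =
      ∑ I ∈ (Finset.range w.length).powerset.filter (fun I => 0 ∈ I),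
        α (wordElemT K J (subwordT J w I))
          * β (wordElemT K J (subwordT J w (Finset.range w.length \ I))) := by
  unfold cprecT
  rw [LinearMap.comp_apply, LinearMap.comp_apply, deltaShPrec_word, map_sum, map_sum]
  apply Finset.sum_congr rfl
  intro I _
  rw [TensorProduct.map_tmul, LinearMap.mul'_apply]

lemma length_subword (w : List J) (S : Finset ℕ) (hS : S ⊆ Finset.range w.length) :
    (subwordT J w S).length = S.card := by
  unfold subwordT
  have key : ∀ l : List ℕ, (∀ i ∈ l, i < w.length) →
      (l.filterMap (fun i => w[i]?)).length = l.length := by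
    intro l
    induction l with
    | nil => simp
    | cons a t iht =>
      intro h
      rw [List.filterMap_cons]
      cases hw : w[a]? with
      | none =>
        exfalso
        have := List.getElem?_eq_none_iff.mp hw
        have := h a (by simp)
        omega
      | some b => simp [iht (fun i hi => h i (by simp [hi]))]
  rw [key _ (fun i hi => Finset.mem_range.mp (hS ((Finset.mem_sort (α := ℕ) (· ≤ ·)).mp hi)))]
  exact Finset.length_sort _

lemma compl_card (n : ℕ) (I : Finset ℕ) (hI : I ⊆ Finset.range n) :
    (Finset.range n \ I).card = n - I.card := by
  rw [Finset.card_sdiff_of_subset hI, Finset.card_range]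

lemma precPow_vanish (τ : TA K J →ₗ[K] K) :
    ∀ (n : ℕ) (w : List J), w.length < n → precPowT K J τ n (wordElemT K J w) = 0 := by
  intro n
  induction n with
  | zero => intro w hw; omega
  | succ n ih =>
    intro w hw
    show cprecT K J τ (precPowT K J τ n) (wordElemT K J w) = 0
    rw [cprecT_word]
    apply Finset.sum_eq_zero
    intro I hI
    simp only [Finset.mem_filter, Finset.mem_powerset] at hI
    have hcard : 1 ≤ I.card := Finset.card_pos.mpr ⟨0, hI.2⟩
    have hle : I.card ≤ w.length := by
      have := Finset.card_le_card hI.1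
      simpa using this
    have hlen : (subwordT J w (Finset.range w.length \ I)).length < n := by
      rw [length_subword J w _ Finset.sdiff_subset, compl_card]
      · omega
      · exact hI.1
    rw [ih _ hlen, mul_zero]

lemma expPrecT_word (τ : TA K J →ₗ[K] K) (w : List J) :
    expPrecT K J τ (wordElemT K J w) =
      ∑ n ∈ Finset.range (w.length + 1), precPowT K J τ n (wordElemT K J w) := by
  unfold expPrecT wordElemT
  rw [extendT_single]
  simp [degT]

lemma expPrecT_word' (τ : TA K J →ₗ[K] K) (w : List J) (N : ℕ) (hN : w.length + 1 ≤ N) :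
    expPrecT K J τ (wordElemT K J w) =
      ∑ n ∈ Finset.range N, precPowT K J τ n (wordElemT K J w) := by
  rw [expPrecT_word]
  apply Finset.sum_subset
  · intro x hx
    simp only [Finset.mem_range] at hx ⊢
    omega
  · intro x _ hx
    simp only [Finset.mem_range] at hx
    exact precPow_vanish K J τ x w (by omega)

lemma expPrec_fixed (τ : TA K J →ₗ[K] K) :
    expPrecT K J τ = iotaT K J + cprecT K J τ (expPrecT K J τ) := by
  apply TA_ext
  intro w
  rw [LinearMap.add_apply, expPrecT_word, Finset.sum_range_succ']
  have h0 : precPowT K J τ 0 (wordElemT K J w) = iotaT K J (wordElemT K J w) := rfl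
  rw [h0, add_comm]
  congr 1
  rw [cprecT_word]
  have : ∀ I ∈ (Finset.range w.length).powerset.filter (fun I => 0 ∈ I),
      τ (wordElemT K J (subwordT J w I))
        * expPrecT K J τ (wordElemT K J (subwordT J w (Finset.range w.length \ I)))
      = ∑ n ∈ Finset.range w.length,
          τ (wordElemT K J (subwordT J w I))
            * precPowT K J τ n (wordElemT K J (subwordT J w (Finset.range w.length \ I))) := by
    intro I hI
    simp only [Finset.mem_filter, Finset.mem_powerset] at hI
    have hcard : 1 ≤ I.card := Finset.card_pos.mpr ⟨0, hI.2⟩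
    have hle : I.card ≤ w.length := by
      have := Finset.card_le_card hI.1
      simpa using this
    have hlen : (subwordT J w (Finset.range w.length \ I)).length + 1 ≤ w.length := by
      rw [length_subword J w _ Finset.sdiff_subset, compl_card _ _ hI.1]
      omega
    rw [expPrecT_word' K J τ _ w.length hlen, Finset.mul_sum]
  rw [Finset.sum_congr rfl this, Finset.sum_comm]
  apply Finset.sum_congr rfl
  intro n _
  exact cprecT_word K J τ (precPowT K J τ n) w

lemma fixed_unique (τ φ ψ : TA K J →ₗ[K] K)
    (hφ : φ = iotaT K J + cprecT K J τ φ) (hψ : ψ = iotaT K J + cprecT K J τ ψ) : φ = ψ := by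
  apply TA_ext
  suffices h : ∀ (N : ℕ) (w : List J), w.length ≤ N →
      φ (wordElemT K J w) = ψ (wordElemT K J w) from fun w => h w.length w le_rfl
  intro N
  induction N with
  | zero =>
    intro w hw
    have : w = [] := List.length_eq_zero_iff.mp (Nat.le_zero.mp hw)
    subst this
    conv_lhs => rw [hφ]
    conv_rhs => rw [hψ]
    rw [LinearMap.add_apply, LinearMap.add_apply, wordElemT_nil, cprecT_one, cprecT_one]
  | succ N ih =>
    intro w hw
    conv_lhs => rw [hφ]
    conv_rhs => rw [hψ]
    rw [LinearMap.add_apply, LinearMap.add_apply, cprecT_word, cprecT_word]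
    congr 1
    apply Finset.sum_congr rfl
    intro I hI
    simp only [Finset.mem_filter, Finset.mem_powerset] at hI
    have hcard : 1 ≤ I.card := Finset.card_pos.mpr ⟨0, hI.2⟩
    have hle : I.card ≤ w.length := by
      have := Finset.card_le_card hI.1
      simpa using this
    have hlen : (subwordT J w (Finset.range w.length \ I)).length ≤ N := by
      rw [length_subword J w _ Finset.sdiff_subset, compl_card _ _ hI.1]
      omega
    rw [ih _ hlen]

lemma expShT_word (τ : TA K J →ₗ[K] K) (w : List J) :
    expShT K J τ (wordElemT K J w) =
      ∑ n ∈ Finset.range (w.length + 1),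
        (1 / ((Nat.factorial n : ℕ) : K)) * shPowT K J τ n (wordElemT K J w) := by
  unfold expShT wordElemT
  rw [extendT_single]
  simp [degT]

lemma expSh_eq_expPrec [CharZero K] (τ : TA K J →ₗ[K] K) (hτ : τ 1 = 0) :
    expShT K J τ = expPrecT K J τ := by
  apply TA_ext
  intro w
  rw [expShT_word, expPrecT_word]
  apply Finset.sum_congr rfl
  intro n _
  rw [shPow_eq_factorial_smul K J τ hτ n, LinearMap.smul_apply, smul_eq_mul, ← mul_assoc,
    one_div_mul_cancel (Nat.cast_ne_zero.mpr (Nat.factorial_ne_zero n)), one_mul]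

/-- **Statement 17.** In the commutative shuffle algebra of linear forms on the tensor
Hopf algebra `T̄(J)` (with the cocommutative unshuffle coproduct), for a linear form `τ`
vanishing on the degree-zero component, the unique solution `φ` of `φ = ι + τ ≺ φ`
is `φ = exp^≺(τ) = exp^⧢(τ)`. -/
theorem nonplanar_ordered_exponential_equals_exponential [CharZero K]
    (τ : TA K J →ₗ[K] K) (hτ : τ 1 = 0) :
    -- the fixed point equation has a unique solution
    (∃! φ : TA K J →ₗ[K] K, φ = iotaT K J + cprecT K J τ φ)
    ∧ -- it is given by both exponentials
    (∀ φ : TA K J →ₗ[K] K, φ = iotaT K J + cprecT K J τ φ →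
      φ = expPrecT K J τ ∧ φ = expShT K J τ) := by
  have hfix := expPrec_fixed K J τ
  have huniq : ∀ φ : TA K J →ₗ[K] K, φ = iotaT K J + cprecT K J τ φ → φ = expPrecT K J τ :=
    fun φ hφ => fixed_unique K J τ φ _ hφ hfix
  refine ⟨⟨expPrecT K J τ, hfix, fun φ hφ => huniq φ hφ⟩, ?_⟩
  intro φ hφ
  have h1 := huniq φ hφ
  exact ⟨h1, h1.trans (expSh_eq_expPrec K J τ hτ).symm⟩
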